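/- Every 1-generic set A with A <_T 0′ has a Σ₁-correct recursive approximation: there is a uniformly computable sequence of binary strings (σ_s) converging to A (in the sense of the limit lemma) such that for every infinite r.e. set S ⊆ ℕ there exists s ∈ S with σ_s an initial segment of A. -/

import Mathlib

/-- Finite binary strings. -/
abbrev BStr := List Bool

/-- The length-`k` initial segment of an infinite sequence, as a finite string. -/
def seg {α : Type} (A : ℕ → α) (k : ℕ) : List α := (List.range k).map A

/-- A Σ⁰₁ (r.e.) set of binary strings. -/
def Sigma01 (V : Set BStr) : Prop :=
  ∃ f : BStr → ℕ → Bool, Computable₂ f ∧ ∀ σ, σ ∈ V ↔ ∃ n, f σ n = true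

/-- A Σ⁰₂ set of binary strings. -/
def Sigma02 (V : Set BStr) : Prop :=
  ∃ f : BStr → ℕ × ℕ → Bool, Computable₂ f ∧ ∀ σ, σ ∈ V ↔ ∃ m, ∀ n, f σ (m, n) = true

/-- `A` meets the set of strings `V`. -/
def Meets (A : ℕ → Bool) (V : Set BStr) : Prop := ∃ k, seg A k ∈ V

/-- `A` avoids the set of strings `V`. -/
def Avoids (A : ℕ → Bool) (V : Set BStr) : Prop := ∃ k, ∀ τ, seg A k <+: τ → τ ∉ V

/-- `A` is 1-generic. -/
def OneGeneric (A : ℕ → Bool) : Prop := ∀ V, Sigma01 V → Meets A V ∨ Avoids A V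

/-- `A` is 2-generic. -/
def TwoGeneric (A : ℕ → Bool) : Prop := ∀ V, Sigma02 V → Meets A V ∨ Avoids A V

/-- A Turing functional: a computable, oracle-use-monotone map from finite oracle
strings to partial values. -/
structure Functional (α β : Type) [Primcodable α] [Primcodable β] where
  φ : List α → ℕ → Option β
  comp : Computable₂ φ
  mono : ∀ {σ τ : List α} {x : ℕ} {b : β}, σ <+: τ → φ σ x = some b → φ τ x = some b

/-- `Φ^A = B` (in particular `Φ^A` is total). -/
def FunApplies {α β : Type} [Primcodable α] [Primcodable β]
    (Φ : Functional α β) (A : ℕ → α) (B : ℕ → β) : Prop :=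
  ∀ x, ∃ k, Φ.φ (seg A k) x = some (B x)

/-- Turing reducibility `B ≤_T A`. -/
def TuringLE {α β : Type} [Primcodable α] [Primcodable β] (B : ℕ → β) (A : ℕ → α) : Prop :=
  ∃ Φ : Functional α β, FunApplies Φ A B

/-- Turing equivalence `B ≡_T A`. -/
def TuringEquiv {α β : Type} [Primcodable α] [Primcodable β] (B : ℕ → β) (A : ℕ → α) : Prop :=
  TuringLE B A ∧ TuringLE A B

/-- A tree: a set of strings closed under initial segments. -/
def IsTree {α : Type} (T : Set (List α)) : Prop := ∀ σ τ : List α, σ <+: τ → τ ∈ T → σ ∈ T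

/-- A recursive tree. -/
def RecTree {α : Type} [Primcodable α] (T : Set (List α)) : Prop :=
  IsTree T ∧ ∃ f : List α → Bool, Computable f ∧ ∀ σ, σ ∈ T ↔ f σ = true

/-- Every string on the tree has a proper extension on the tree. -/
def ExtendibleTree {α : Type} (T : Set (List α)) : Prop :=
  ∀ σ ∈ T, ∃ τ ∈ T, σ <+: τ ∧ σ ≠ τ

/-- The set `[T]` of infinite paths through the tree `T`. -/
def paths {α : Type} (T : Set (List α)) : Set (ℕ → α) := {X | ∀ k, seg X k ∈ T}

/-- A clopen subset of the path space: a finite union of basic cylinders. -/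
def ClopenC {α : Type} (N : Set (ℕ → α)) : Prop :=
  ∃ F : Finset (List α), N = {X | ∃ σ ∈ F, seg X σ.length = σ}

/-- A Π⁰₁ class: the set of paths through a recursive tree. -/
def Pi01C {α : Type} [Primcodable α] (P : Set (ℕ → α)) : Prop := ∃ T, RecTree T ∧ P = paths T

/-- A thin Π⁰₁ class: every Π⁰₁ subclass is the intersection with a clopen set. -/
def ThinPi01 {α : Type} [Primcodable α] (P : Set (ℕ → α)) : Prop :=
  Pi01C P ∧ ∀ Q, Pi01C Q → Q ⊆ P → ∃ N, ClopenC N ∧ Q = P ∩ N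

/-- `A` is of thin-free degree: no set Turing equivalent to `A` belongs to a thin Π⁰₁ class. -/
def ThinFreeDegree (A : ℕ → Bool) : Prop :=
  ∀ B : ℕ → Bool, TuringEquiv B A → ∀ P : Set (ℕ → Bool), ThinPi01 P → B ∉ P

open Classical in
/-- The halting problem `0′`. -/
noncomputable def K : ℕ → Bool := fun n =>
  if (Nat.Partrec.Code.eval (Denumerable.ofNat Nat.Partrec.Code n) n).Dom then true else false

/-- A recursive (limit-lemma) approximation of `A`. -/
def RecApprox (σs : ℕ → BStr) (A : ℕ → Bool) : Prop :=
  Computable σs ∧ ∀ n, ∃ s0, ∀ s ≥ s0, (σs s).take n = seg A n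

/-- `τ` is an initial segment of `A`. -/
def InitSegOf {α : Type} (τ : List α) (A : ℕ → α) : Prop := τ = seg A τ.length

/-- A recursively enumerable set of natural numbers. -/
def REset (S : Set ℕ) : Prop :=
  ∃ f : ℕ → ℕ → Bool, Computable₂ f ∧ ∀ s, s ∈ S ↔ ∃ n, f s n = true

/-- A Σ₁-correct approximation: every infinite r.e. set of stages contains a stage
whose approximating string is a true initial segment of `A`. -/
def SigmaOneCorrect (σs : ℕ → BStr) (A : ℕ → Bool) : Prop :=
  ∀ S : Set ℕ, REset S → S.Infinite → ∃ s ∈ S, InitSegOf (σs s) A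

/-! If `A ≤_T 0′` via `Φ`, applying `Φ` to the first `s` bits of the stage-`s` approximation of
`0′` gives a computable sequence of strings `σ_s` converging to `A`. For an r.e. set of stages `S`,
the strings `{σ_s : s ∈ S}` form an r.e. set `V`. A 1-generic `A` either meets `V`, which is
Σ₁-correctness, or has an initial segment with no extension in `V`; the latter is impossible,
since `σ_s` extends any given initial segment of `A` for all large `s`, and `S` is infinite. -/

open Filter

section Segments

variable {α : Type}

lemma seg_succ (A : ℕ → α) (n : ℕ) : seg A (n + 1) = seg A n ++ [A n] := by
  simp [seg, List.range_succ]

lemma seg_length (A : ℕ → α) (k : ℕ) : (seg A k).length = k := by simp [seg]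

lemma seg_take (A : ℕ → α) {n k : ℕ} (h : n ≤ k) : (seg A k).take n = seg A n := by
  simp [seg, ← List.map_take, List.take_range, Nat.min_eq_left h]

lemma seg_prefix_seg (A : ℕ → α) {n k : ℕ} (h : n ≤ k) : seg A n <+: seg A k := by
  rw [← seg_take A h]
  exact List.take_prefix _ _

lemma seg_congr {A B : ℕ → α} {n : ℕ} (h : ∀ x < n, A x = B x) : seg A n = seg B n :=
  List.map_congr_left fun x hx => h x (List.mem_range.1 hx)

lemma initSegOf_seg (A : ℕ → α) (k : ℕ) : InitSegOf (seg A k) A := by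
  rw [InitSegOf, seg_length]

lemma Computable₂.seg [Primcodable α] {g : ℕ → ℕ → α} (hg : Computable₂ g) :
    Computable₂ fun s n => seg (g s) n := by
  have hstep : Computable₂ fun (s : ℕ) (p : ℕ × List α) => p.2 ++ [g s p.1] :=
    Computable.list_concat.comp₂ (Computable.snd.comp Computable.snd).to₂
      (hg.comp₂ Computable.fst.to₂ (Computable.fst.comp Computable.snd).to₂)
  refine (Computable.nat_rec Computable.snd (Computable.const []) (hstep.comp₂
    (Computable.fst.comp Computable.fst).to₂ Computable.snd.to₂)).to₂.of_eq fun ⟨s, n⟩ => ?_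
  induction n with
  | zero => rfl
  | succ n ih => simp only at ih ⊢; rw [ih, seg_succ]

end Segments

def ConvergesPointwise {α : Type} (g : ℕ → ℕ → α) (A : ℕ → α) : Prop :=
  ∀ x, ∀ᶠ s in atTop, g s x = A x

lemma ConvergesPointwise.eventually_seg_eq {α : Type} {g : ℕ → ℕ → α} {A : ℕ → α}
    (h : ConvergesPointwise g A) (n : ℕ) : ∀ᶠ s in atTop, seg (g s) n = seg A n := by
  have hall : ∀ᶠ s in atTop, ∀ x ∈ Finset.range n, g s x = A x :=
    (Finset.range n).eventually_all.2 fun x _ => h x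
  filter_upwards [hall] with s hs
  exact seg_congr fun x hx => hs x (Finset.mem_range.2 hx)

lemma ConvergesPointwise.eventually_seg_prefix_diag {α : Type} {g : ℕ → ℕ → α} {A : ℕ → α}
    (h : ConvergesPointwise g A) (n : ℕ) : ∀ᶠ s in atTop, seg A n <+: seg (g s) s := by
  filter_upwards [h.eventually_seg_eq n, eventually_ge_atTop n] with s hs hns
  exact hs ▸ seg_prefix_seg (g s) hns

def haltingApprox (s n : ℕ) : Bool :=
  (Nat.Partrec.Code.evaln s (Denumerable.ofNat Nat.Partrec.Code n) n).isSome

lemma primrec₂_haltingApprox : Primrec₂ haltingApprox :=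
  Primrec.option_isSome.comp <| Nat.Partrec.Code.primrec_evaln.comp
    ((Primrec.fst.pair ((Primrec.ofNat _).comp Primrec.snd)).pair Primrec.snd)

lemma convergesPointwise_haltingApprox : ConvergesPointwise haltingApprox K := by
  classical
  intro n
  by_cases hdom : (Nat.Partrec.Code.eval (Denumerable.ofNat Nat.Partrec.Code n) n).Dom
  · obtain ⟨x, hx⟩ := Part.dom_iff_mem.1 hdom
    obtain ⟨k, hk⟩ := Nat.Partrec.Code.evaln_complete.1 hx
    filter_upwards [eventually_ge_atTop k] with s hs
    simp only [haltingApprox, K, hdom, if_true, Option.isSome_iff_exists]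
    exact ⟨x, Nat.Partrec.Code.evaln_mono hs hk⟩
  · refine Eventually.of_forall fun s => ?_
    simp only [haltingApprox, K, hdom, if_false, Option.isSome_eq_false_iff,
      Option.isNone_iff_eq_none, Option.eq_none_iff_forall_not_mem]
    exact fun x hx => hdom (Part.dom_iff_mem.2 ⟨x, Nat.Partrec.Code.evaln_sound hx⟩)

lemma TuringLE.exists_computable_convergesPointwise {α β : Type} [Primcodable α]
    [Primcodable β] [Inhabited β] {B : ℕ → β} {X : ℕ → α} (hBX : TuringLE B X)
    {g : ℕ → ℕ → α} (hg : Computable₂ g) (hgX : ConvergesPointwise g X) :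
    ∃ h : ℕ → ℕ → β, Computable₂ h ∧ ConvergesPointwise h B := by
  obtain ⟨Φ, hΦ⟩ := hBX
  refine ⟨fun s x => (Φ.φ (seg (g s) s) x).getD default, ?_, fun x => ?_⟩
  · exact (Computable.option_getD (Φ.comp.comp ((hg.seg.comp Computable.id Computable.id).comp
      Computable.fst) Computable.snd) (Computable.const default)).to₂
  · obtain ⟨k, hk⟩ := hΦ x
    filter_upwards [hgX.eventually_seg_prefix_diag k] with s hs
    rw [Φ.mono hs hk, Option.getD_some]

lemma exists_computable_convergesPointwise_of_turingLE_K {A : ℕ → Bool} (hA : TuringLE A K) :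
    ∃ g : ℕ → ℕ → Bool, Computable₂ g ∧ ConvergesPointwise g A :=
  hA.exists_computable_convergesPointwise primrec₂_haltingApprox.to_comp
    convergesPointwise_haltingApprox

lemma recApprox_seg_diag {g : ℕ → ℕ → Bool} {A : ℕ → Bool} (hg : Computable₂ g)
    (hgA : ConvergesPointwise g A) : RecApprox (fun s => seg (g s) s) A := by
  refine ⟨hg.seg.comp Computable.id Computable.id, fun n => eventually_atTop.1 ?_⟩
  filter_upwards [hgA.eventually_seg_eq n, eventually_ge_atTop n] with s hs hns
  rw [seg_take _ hns, hs]

lemma RecApprox.eventually_seg_prefix {σs : ℕ → BStr} {A : ℕ → Bool} (h : RecApprox σs A)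
    (n : ℕ) : ∀ᶠ s in atTop, seg A n <+: σs s := by
  filter_upwards [eventually_atTop.2 (h.2 n)] with s hs
  exact hs ▸ List.take_prefix n (σs s)

lemma sigma01_image {σs : ℕ → BStr} (hσ : Computable σs) {S : Set ℕ} (hS : REset S) :
    Sigma01 (σs '' S) := by
  obtain ⟨f, hf, hfS⟩ := hS
  refine ⟨fun τ p => decide (σs p.unpair.1 = τ) && f p.unpair.1 p.unpair.2, ?_, fun τ => ?_⟩
  · have hstage : Computable fun a : BStr × ℕ => a.2.unpair.1 :=
      (Primrec.fst.comp (Primrec.unpair.comp Primrec.snd)).to_comp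
    have hwitness : Computable fun a : BStr × ℕ => a.2.unpair.2 :=
      (Primrec.snd.comp (Primrec.unpair.comp Primrec.snd)).to_comp
    exact (Primrec.and.to_comp.comp
      (Primrec.eq.decide.to_comp.comp (hσ.comp hstage) Computable.fst)
      (hf.comp hstage hwitness)).to₂
  · constructor
    · rintro ⟨s, hsS, rfl⟩
      obtain ⟨n, hn⟩ := (hfS s).1 hsS
      exact ⟨Nat.pair s n, by simp [hn]⟩
    · rintro ⟨p, hp⟩
      simp only [Bool.and_eq_true, decide_eq_true_eq] at hp
      exact ⟨p.unpair.1, (hfS _).2 ⟨p.unpair.2, hp.2⟩, hp.1⟩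

theorem OneGeneric.sigmaOneCorrect {A : ℕ → Bool} (hA : OneGeneric A) {σs : ℕ → BStr}
    (hσ : RecApprox σs A) : SigmaOneCorrect σs A := by
  intro S hS hSinf
  rcases hA _ (sigma01_image hσ.1 hS) with ⟨k, s, hsS, hs⟩ | ⟨k, hk⟩
  · exact ⟨s, hsS, hs ▸ initSegOf_seg A k⟩
  · obtain ⟨s, hsS, hpre⟩ :=
      (Nat.frequently_atTop_iff_infinite.2 hSinf).and_eventually (hσ.eventually_seg_prefix k)
        |>.exists
    exact absurd ⟨s, hsS, rfl⟩ (hk _ hpre)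

theorem one_generic_sigma1_correct_approx_general (A : ℕ → Bool) (hA : OneGeneric A)
    (hle : TuringLE A K) :
    ∃ σs : ℕ → BStr, RecApprox σs A ∧ SigmaOneCorrect σs A := by
  obtain ⟨g, hg, hgA⟩ := exists_computable_convergesPointwise_of_turingLE_K hle
  have hσ := recApprox_seg_diag hg hgA
  exact ⟨_, hσ, hA.sigmaOneCorrect hσ⟩

/-- every 1-generic set `A <_T 0′` has a Σ₁-correct recursive
approximation. -/
theorem one_generic_sigma1_correct_approx (A : ℕ → Bool) (hA : OneGeneric A)
    (hle : TuringLE A K) (hlt : ¬ TuringLE K A) :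
    ∃ σs : ℕ → BStr, RecApprox σs A ∧ SigmaOneCorrect σs A :=
  one_generic_sigma1_correct_approx_general A hA hle
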